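/- For all $n \ge 26$, the number of partitions of $n+1$ into distinct odd parts strictly exceeds the number of partitions of $n$ into distinct odd parts: $q(n+1) > q(n)$. -/

import Mathlib

/-- `qOdd n` is the number of partitions of `n` into distinct odd parts. -/
def qOdd (n : ℕ) : ℕ :=
  Fintype.card {p : n.Partition // p.parts.Nodup ∧ ∀ i ∈ p.parts, Odd i}

/-! Adding a part `1`, or, if `1` is already a part, deleting it and raising the largest part
by `2`, maps partitions of `n` into distinct odd parts injectively to those of `n + 1`: the two
kinds of images are told apart by whether `1` is a part. In an image of the second kind the
largest part minus `2` is never a part, whereas for `27 ≤ n + 1` there is a partition of `n + 1`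
into distinct odd parts without `1` whose two largest parts are consecutive odd numbers: add
`∅`, `{5}`, `{3, 7}` or `{3}` to such a pair according to `(n + 1) % 4`. -/

namespace Multiset

variable {α : Type*} [LinearOrder α] [OrderBot α] {s : Multiset α} {a : α}

theorem sup_mem_of_ne_zero (hs : s ≠ 0) : s.sup ∈ s := by
  induction s using Multiset.induction_on with
  | empty => contradiction
  | cons b s ih =>
    rw [sup_cons]
    rcases eq_or_ne s 0 with rfl | hs'
    · simp
    rcases le_total b s.sup with h | h
    · rw [sup_of_le_right h]
      exact mem_cons_of_mem (ih hs')
    · rw [sup_of_le_left h]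
      exact mem_cons_self b s

theorem sup_cons_of_forall_le (h : ∀ b ∈ s, b ≤ a) : (a ::ₘ s).sup = a := by
  rw [sup_cons, sup_of_le_left (Multiset.sup_le.2 h)]

theorem one_lt_sup_of_nodup {s : Multiset ℕ} (hd : s.Nodup) (hs : 1 < s.sum) : 1 < s.sup := by
  by_contra! h
  have hsub : (⟨s, hd⟩ : Finset ℕ) ⊆ Finset.range 2 := fun x hx =>
    Finset.mem_range.2 (Nat.lt_succ_of_le ((le_sup hx).trans h))
  have := Finset.sum_le_sum_of_subset (f := id) hsub
  simp only [Finset.sum_mk, map_id', Finset.sum_range_succ, Finset.range_one,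
    Finset.sum_singleton, id_eq, zero_add] at this
  omega

end Multiset

open Multiset

def bumpParts (s : Multiset ℕ) : Multiset ℕ :=
  if 1 ∈ s then (s.sup + 2) ::ₘ (s.erase 1).erase s.sup else 1 ::ₘ s

section bumpParts

variable {s t : Multiset ℕ}

theorem exists_bumpParts_eq_of_one_mem (hd : s.Nodup) (hs : 1 < s.sum) (h1 : 1 ∈ s) :
    ∃ m A, s = 1 ::ₘ m ::ₘ A ∧ bumpParts s = (m + 2) ::ₘ A ∧ ∀ a ∈ A, a < m := by
  have hs0 : s ≠ 0 := fun h => by simp [h] at h1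
  have hsup : s.sup ∈ s.erase 1 :=
    (mem_erase_of_ne (one_lt_sup_of_nodup hd hs).ne').2 (sup_mem_of_ne_zero hs0)
  refine ⟨s.sup, (s.erase 1).erase s.sup, by rw [cons_erase hsup, cons_erase h1],
    by rw [bumpParts, if_pos h1], fun a ha => ?_⟩
  have hne : a ≠ s.sup := by
    rintro rfl
    exact (hd.erase 1).notMem_erase ha
  exact (le_sup (mem_of_mem_erase (mem_of_mem_erase ha))).lt_of_ne hne

theorem sum_bumpParts (hd : s.Nodup) (hs : 1 < s.sum) : (bumpParts s).sum = s.sum + 1 := by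
  by_cases h1 : 1 ∈ s
  · obtain ⟨m, A, rfl, hb, -⟩ := exists_bumpParts_eq_of_one_mem hd hs h1
    simp only [hb, sum_cons]
    omega
  · rw [bumpParts, if_neg h1, sum_cons, add_comm]

theorem nodup_bumpParts (hd : s.Nodup) (hs : 1 < s.sum) : (bumpParts s).Nodup := by
  by_cases h1 : 1 ∈ s
  · obtain ⟨m, A, rfl, hb, hA⟩ := exists_bumpParts_eq_of_one_mem hd hs h1
    rw [hb, nodup_cons]
    exact ⟨fun h => by linarith [hA _ h], (hd.of_cons).of_cons⟩
  · rw [bumpParts, if_neg h1]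
    exact hd.cons h1

theorem odd_of_mem_bumpParts (hd : s.Nodup) (hs : 1 < s.sum) (hodd : ∀ i ∈ s, Odd i) :
    ∀ i ∈ bumpParts s, Odd i := by
  by_cases h1 : 1 ∈ s
  · obtain ⟨m, A, rfl, hb, -⟩ := exists_bumpParts_eq_of_one_mem hd hs h1
    rw [hb]
    intro i hi
    rcases mem_cons.1 hi with rfl | hi
    · exact (hodd m (by simp)).add_even even_two
    · exact hodd i (by simp [hi])
  · rw [bumpParts, if_neg h1]
    intro i hi
    rcases mem_cons.1 hi with rfl | hi
    exacts [odd_one, hodd i hi]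

theorem one_mem_bumpParts_iff (hd : s.Nodup) (hs : 1 < s.sum) : 1 ∈ bumpParts s ↔ 1 ∉ s := by
  by_cases h1 : 1 ∈ s
  · obtain ⟨m, A, rfl, hb, -⟩ := exists_bumpParts_eq_of_one_mem hd hs h1
    simp only [hb, mem_cons, true_or, not_true, iff_false]
    rw [nodup_cons, mem_cons, not_or] at hd
    rintro (h | h)
    exacts [by omega, hd.1.2 h]
  · simp [bumpParts, h1]

theorem bumpParts_inj (hds : s.Nodup) (hs : 1 < s.sum) (hdt : t.Nodup) (ht : 1 < t.sum)
    (he : bumpParts s = bumpParts t) : s = t := by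
  have h1 : 1 ∈ s ↔ 1 ∈ t :=
    not_iff_not.1 (by rw [← one_mem_bumpParts_iff hds hs, ← one_mem_bumpParts_iff hdt ht, he])
  by_cases hs1 : 1 ∈ s
  · obtain ⟨m, A, rfl, hbs, hA⟩ := exists_bumpParts_eq_of_one_mem hds hs hs1
    obtain ⟨m', B, rfl, hbt, hB⟩ := exists_bumpParts_eq_of_one_mem hdt ht (h1.1 hs1)
    rw [hbs, hbt] at he
    have hm : m = m' := by
      have := congrArg Multiset.sup he
      rw [sup_cons_of_forall_le fun a ha => by linarith [hA a ha],
        sup_cons_of_forall_le fun a ha => by linarith [hB a ha]] at this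
      omega
    subst hm
    rw [(cons_inj_right _).1 he]
  · rw [bumpParts, if_neg hs1, bumpParts, if_neg (mt h1.2 hs1)] at he
    exact (cons_inj_right _).1 he

theorem bumpParts_ne_of_sup_eq_add_two (hd : s.Nodup) (hs : 1 < s.sum) {w : Multiset ℕ} {k : ℕ}
    (h1 : 1 ∉ w) (hk : k ∈ w) (hsup : w.sup = k + 2) : bumpParts s ≠ w := by
  rintro rfl
  by_cases hs1 : 1 ∈ s
  · obtain ⟨m, A, rfl, hb, hA⟩ := exists_bumpParts_eq_of_one_mem hd hs hs1
    rw [hb, sup_cons_of_forall_le fun a ha => by linarith [hA a ha]] at hsup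
    obtain rfl : k = m := by omega
    rw [hb, mem_cons] at hk
    exact hk.elim (by omega) fun h => (hA k h).false
  · exact h1 ((one_mem_bumpParts_iff hd hs).2 hs1)

end bumpParts

theorem exists_distinct_odd_sup_sub_two_mem {N : ℕ} (hN : 27 ≤ N) :
    ∃ w : Multiset ℕ, ∃ k, w.Nodup ∧ (∀ i ∈ w, Odd i) ∧ w.sum = N ∧ 1 ∉ w ∧ k ∈ w ∧
      w.sup = k + 2 := by
  obtain ⟨T, hTd, hT, hTmod, hTle⟩ : ∃ T : Multiset ℕ, T.Nodup ∧
      (∀ i ∈ T, Odd i ∧ 3 ≤ i ∧ i ≤ 7) ∧ T.sum % 4 = N % 4 ∧ T.sum ≤ 10 := by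
    have : N % 4 < 4 := Nat.mod_lt _ (by norm_num)
    interval_cases N % 4
    exacts [⟨0, by decide⟩, ⟨{5}, by decide⟩, ⟨{3, 7}, by decide⟩, ⟨{3}, by decide⟩]
  set k := (N - 2 - T.sum) / 2 with hk
  have hk9 : 9 ≤ k := by omega
  have hkodd : Odd k := Nat.odd_iff.2 (by omega)
  refine ⟨(k + 2) ::ₘ k ::ₘ T, k, ?_, ?_, ?_, ?_, by simp, ?_⟩
  · simp only [nodup_cons, mem_cons, not_or]
    refine ⟨⟨by omega, fun h => ?_⟩, fun h => ?_, hTd⟩ <;> linarith [(hT _ h).2.2]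
  · intro i hi
    rcases mem_cons.1 hi with rfl | hi
    · exact hkodd.add_even even_two
    rcases mem_cons.1 hi with rfl | hi
    exacts [hkodd, (hT i hi).1]
  · simp only [sum_cons]
    omega
  · simp only [mem_cons, not_or]
    exact ⟨by omega, by omega, fun h => by linarith [(hT 1 h).2.1]⟩
  · refine sup_cons_of_forall_le fun b hb => ?_
    rcases mem_cons.1 hb with rfl | hb
    exacts [by omega, by linarith [(hT b hb).2.2]]

abbrev DistinctOddPartition (n : ℕ) :=
  {p : n.Partition // p.parts.Nodup ∧ ∀ i ∈ p.parts, Odd i}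

namespace DistinctOddPartition

variable {n : ℕ}

def ofParts (s : Multiset ℕ) (hd : s.Nodup) (hodd : ∀ i ∈ s, Odd i) (hsum : s.sum = n) :
    DistinctOddPartition n :=
  ⟨⟨s, fun hi => (hodd _ hi).pos, hsum⟩, hd, hodd⟩

def bump (hn : 1 < n) (p : DistinctOddPartition n) : DistinctOddPartition (n + 1) :=
  have hs : 1 < p.1.parts.sum := by rwa [p.1.parts_sum]
  .ofParts (bumpParts p.1.parts) (nodup_bumpParts p.2.1 hs) (odd_of_mem_bumpParts p.2.1 hs p.2.2)
    (by rw [sum_bumpParts p.2.1 hs, p.1.parts_sum])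

theorem bump_injective (hn : 1 < n) : Function.Injective (bump hn) := by
  intro p q he
  have hp : 1 < p.1.parts.sum := by rwa [p.1.parts_sum]
  have hq : 1 < q.1.parts.sum := by rwa [q.1.parts_sum]
  exact Subtype.ext <| Nat.Partition.ext <|
    bumpParts_inj p.2.1 hp q.2.1 hq (congrArg (fun r => r.1.parts) he)

theorem bump_not_surjective (hn : 26 ≤ n) :
    ¬ Function.Surjective (bump (n := n) (by omega)) := by
  obtain ⟨w, k, hd, hodd, hsum, h1, hk, hsup⟩ :=
    exists_distinct_odd_sup_sub_two_mem (N := n + 1) (by omega)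
  intro hsurj
  obtain ⟨p, hp⟩ := hsurj (.ofParts w hd hodd hsum)
  exact bumpParts_ne_of_sup_eq_add_two p.2.1 (by rw [p.1.parts_sum]; omega) h1 hk hsup
    (congrArg (fun r => r.1.parts) hp)

end DistinctOddPartition

/-- For all `n ≥ 26`, the number of partitions of `n+1` into distinct odd parts strictly
exceeds the number of partitions of `n` into distinct odd parts. -/
theorem qOdd_strict_mono (n : ℕ) (hn : 26 ≤ n) : qOdd n < qOdd (n + 1) :=
  Fintype.card_lt_of_injective_not_surjective _ (DistinctOddPartition.bump_injective _)
    (DistinctOddPartition.bump_not_surjective hn)
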